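/- arXiv:2206.01614 — 2 statements merged into one kernel-verified Lean document; each statement's English description precedes it below -/
import Mathlib

section
/- Let h₁ and h₂ be programs such that h₂ is a specialisation of h₁ (h₁ ⪯ h₂) and h₁ is totally incomplete (B ∪ h₁ ⊭ e for every positive example e ∈ E⁺). Then h₂ is totally incomplete; in particular, if E⁺ ≠ ∅ then h₂ is not a solution and hence not an optimal solution. -/
/- A framework for definite logic programs (terms are variables or constants),
with Herbrand-interpretation semantics: for a definite theory, classical
first-order entailment of a ground atom coincides with truth in every
(Herbrand) model. -/

variable {V C P : Type}

/-- A term is a variable or a constant. -/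
inductive Term (V C : Type) where
  | var : V → Term V C
  | const : C → Term V C

/-- An atom: a predicate symbol applied to a list of terms. -/
structure Atom (V C P : Type) where
  pred : P
  args : List (Term V C)

/-- A definite clause (rule): a head atom and a list of body atoms,
read as ∀x̄ (B₁ ∧ … ∧ Bₙ → A). -/
structure Rule (V C P : Type) where
  head : Atom V C P
  body : List (Atom V C P)

noncomputable instance : DecidableEq (Rule V C P) := Classical.decEq _

/-- A ground atom: a predicate symbol applied to constants. -/
structure GroundAtom (C P : Type) where
  pred : P
  args : List C

/-- A (definite) program is a finite set of definite clauses. -/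
abbrev Program (V C P : Type) := Finset (Rule V C P)

/-- Applying a substitution to a term. -/
def Term.subst (θ : V → Term V C) : Term V C → Term V C
  | .var v => θ v
  | .const c => .const c

/-- Applying a substitution to an atom. -/
def Atom.subst (θ : V → Term V C) (a : Atom V C P) : Atom V C P :=
  ⟨a.pred, a.args.map (Term.subst θ)⟩

/-- Grounding a term by assigning constants to variables. -/
def Term.groundWith (g : V → C) : Term V C → C
  | .var v => g v
  | .const c => c

/-- Grounding an atom. -/
def Atom.groundWith (g : V → C) (a : Atom V C P) : GroundAtom C P :=
  ⟨a.pred, a.args.map (Term.groundWith g)⟩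

/-- A (Herbrand) interpretation: a set of ground atoms. -/
abbrev Interp (C P : Type) := Set (GroundAtom C P)

/-- A rule holds in an interpretation if every ground instance whose body
atoms are all true has a true head. -/
def Rule.holds (I : Interp C P) (r : Rule V C P) : Prop :=
  ∀ g : V → C, (∀ b ∈ r.body, Atom.groundWith g b ∈ I) → Atom.groundWith g r.head ∈ I

/-- An interpretation is a model of a program if all its rules hold in it. -/
def Program.isModel (I : Interp C P) (T : Program V C P) : Prop :=
  ∀ r ∈ T, Rule.holds I r

/-- Entailment of a ground atom by a definite program: truth in every
(Herbrand) model.  For definite theories this coincides with classical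
first-order entailment of a ground atom. -/
def Entails (T : Program V C P) (e : GroundAtom C P) : Prop :=
  ∀ I : Interp C P, Program.isModel I T → e ∈ I

/-- The predicate symbols occurring in the head of a rule of `h`. -/
def Program.headPreds (h : Program V C P) : Set P :=
  { p | ∃ r ∈ h, r.head.pred = p }

/-- The predicate symbols occurring in the body of a rule of `h`. -/
def Program.bodyPreds (h : Program V C P) : Set P :=
  { p | ∃ r ∈ h, ∃ a ∈ r.body, a.pred = p }

/-- A program is separable when (i) it has at least two rules and (ii) no
predicate symbol in the head of one of its rules also appears in the body
of one of its rules. -/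
def Program.Separable (h : Program V C P) : Prop :=
  2 ≤ h.card ∧ ∀ p ∈ Program.headPreds h, p ∉ Program.bodyPreds h

/-- The number of literals in a rule: its head plus its body literals. -/
def Rule.size (r : Rule V C P) : ℕ := 1 + r.body.length

/-- The size of a program: total number of literals occurring in its rules. -/
def Program.size (h : Program V C P) : ℕ := ∑ r ∈ h, Rule.size r

/-- BK independence: no predicate symbol occurring in the body of a rule of
the background knowledge `B` occurs in the head of a rule of `h`. -/
def BKIndep (B h : Program V C P) : Prop :=
  ∀ p ∈ Program.bodyPreds B, p ∉ Program.headPreds h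

/-- `h` is complete: `B ∪ h ⊨ e` for every positive example `e`. -/
def Complete (B h : Program V C P) (Epos : Finset (GroundAtom C P)) : Prop :=
  ∀ e ∈ Epos, Entails (B ∪ h) e

/-- `h` is consistent: `B ∪ h ⊭ e` for every negative example `e`. -/
def Consistent (B h : Program V C P) (Eneg : Finset (GroundAtom C P)) : Prop :=
  ∀ e ∈ Eneg, ¬ Entails (B ∪ h) e

/-- `h` is partially complete: `B ∪ h ⊨ e` for some positive example `e`. -/
def PartiallyComplete (B h : Program V C P) (Epos : Finset (GroundAtom C P)) : Prop :=
  ∃ e ∈ Epos, Entails (B ∪ h) e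

/-- `h` is totally incomplete: `B ∪ h ⊭ e` for every positive example `e`. -/
def TotallyIncomplete (B h : Program V C P) (Epos : Finset (GroundAtom C P)) : Prop :=
  ∀ e ∈ Epos, ¬ Entails (B ∪ h) e

/-- A solution is a complete and consistent program. -/
def Solution (B h : Program V C P) (Epos Eneg : Finset (GroundAtom C P)) : Prop :=
  Complete B h Epos ∧ Consistent B h Eneg

/-- A promising program is a partially complete and consistent program. -/
def Promising (B h : Program V C P) (Epos Eneg : Finset (GroundAtom C P)) : Prop :=
  PartiallyComplete B h Epos ∧ Consistent B h Eneg

/-- An optimal solution: a solution of minimal size among all solutions. -/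
def OptimalSolution (B h : Program V C P) (Epos Eneg : Finset (GroundAtom C P)) : Prop :=
  Solution B h Epos Eneg ∧
    ∀ h' : Program V C P, Solution B h' Epos Eneg → Program.size h ≤ Program.size h'

/-- Clause `r₁` subsumes clause `r₂`: some substitution maps the head of `r₁`
to the head of `r₂` and every body literal of `r₁` to a body literal of `r₂`
(i.e. `r₁θ ⊆ r₂` viewing definite clauses as sets of literals). -/
def Rule.Subsumes (r₁ r₂ : Rule V C P) : Prop :=
  ∃ θ : V → Term V C, Atom.subst θ r₁.head = r₂.head ∧
    ∀ b ∈ r₁.body, Atom.subst θ b ∈ r₂.body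

/-- `h₁` subsumes `h₂` (`h₁ ⪯ h₂`): every clause of `h₂` is subsumed by some
clause of `h₁`.  `h₂` is a specialisation of `h₁`, and `h₁` a generalisation
of `h₂`. -/
def Program.Subsumes (h₁ h₂ : Program V C P) : Prop :=
  ∀ r₂ ∈ h₂, ∃ r₁ ∈ h₁, Rule.Subsumes r₁ r₂


lemma groundWith_subst {V C P : Type} (g : V → C) (θ : V → Term V C) (a : Atom V C P) :
    Atom.groundWith g (Atom.subst θ a) = Atom.groundWith (fun v => Term.groundWith g (θ v)) a := by
  unfold Atom.groundWith Atom.subst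
  simp only [List.map_map]
  congr 1
  apply List.map_congr_left
  intro t _
  cases t <;> rfl

lemma holds_of_subsumes {V C P : Type} (I : Interp C P) {r₁ r₂ : Rule V C P}
    (hs : Rule.Subsumes r₁ r₂) (h : Rule.holds I r₁) : Rule.holds I r₂ := by
  obtain ⟨θ, hhd, hbd⟩ := hs
  intro g hb
  have := h (fun v => Term.groundWith g (θ v)) (fun b hbm => by
    rw [← groundWith_subst]
    exact hb _ (hbd b hbm))
  rwa [← groundWith_subst, hhd] at this

/-- If `h₂` is a specialisation of `h₁` (`h₁ ⪯ h₂`) and `h₁` is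
totally incomplete, then `h₂` is totally incomplete; in particular, if
`E⁺ ≠ ∅` then `h₂` is not a solution, hence not an optimal solution. -/
theorem specialisation_of_totally_incomplete {V C P : Type}
    (B h₁ h₂ : Program V C P) (Epos Eneg : Finset (GroundAtom C P))
    (hsub : Program.Subsumes h₁ h₂)
    (hti : TotallyIncomplete B h₁ Epos) :
    TotallyIncomplete B h₂ Epos ∧
    (Epos.Nonempty →
      ¬ Solution B h₂ Epos Eneg ∧ ¬ OptimalSolution B h₂ Epos Eneg) := by
  have key : TotallyIncomplete B h₂ Epos := by
    intro e he hent
    apply hti e he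
    intro I hI
    apply hent
    intro r hr
    rcases Finset.mem_union.mp hr with h | h
    · exact hI r (Finset.mem_union_left _ h)
    · obtain ⟨r₁, hr₁, hs⟩ := hsub r h
      exact holds_of_subsumes I hs (hI r₁ (Finset.mem_union_right _ hr₁))
  refine ⟨key, fun ⟨e, he⟩ => ?_⟩
  have hns : ¬ Solution B h₂ Epos Eneg := fun hsol => key e he (hsol.1 e he)
  exact ⟨hns, fun hopt => hns hopt.1⟩
end

section
/- Assume BK independence (no predicate symbol occurring in the body of a rule of the background knowledge B occurs in the head of a rule of any program under consideration). Let h_o be an optimal solution (a solution of minimal size among all definite programs that are solutions) that is separable. Then no nonempty proper subset h₂ ⊊ h_o is totally incomplete: if h₂ ⊆ h_o is nonempty and totally incomplete, then h₃ = h_o \ h₂ is itself a complete and consistent program of strictly smaller size, contradicting optimality of h_o. Consequently, a totally incomplete program cannot occur as a nonempty proper part of an optimal separable solution. -/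
/- A framework for definite logic programs (terms are variables or constants),
with Herbrand-interpretation semantics: for a definite theory, classical
first-order entailment of a ground atom coincides with truth in every
(Herbrand) model. -/

variable {V C P : Type}

/-- The set of entailed ground atoms (the least Herbrand model). -/
def Mmod (T : Program V C P) : Interp C P := {a | Entails T a}

lemma Mmod_isModel (T : Program V C P) : Program.isModel (Mmod T) T := by
  intro r hr g hb I hI
  exact hI r hr g (fun b hbmem => hb b hbmem I hI)

lemma entails_mono {T T' : Program V C P} (hsub : T ⊆ T') {a : GroundAtom C P}
    (h : Entails T a) : Entails T' a :=
  fun I hI => h I (fun r hr => hI r (hsub hr))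

lemma split_entails {V C P : Type} (B ho h₂ : Program V C P)
    (hBK : BKIndep B ho)
    (hsep2 : ∀ p ∈ Program.headPreds ho, p ∉ Program.bodyPreds ho)
    (hsub : h₂ ⊆ ho) (e : GroundAtom C P) (he : Entails (B ∪ ho) e) :
    Entails (B ∪ h₂) e ∨ Entails (B ∪ (ho \ h₂)) e := by
  classical
  set W : Interp C P :=
    {a | Entails B a ∨ (a.pred ∈ Program.headPreds ho ∧
      (Entails (B ∪ h₂) a ∨ Entails (B ∪ (ho \ h₂)) a))} with hW
  have hWmodel : Program.isModel W (B ∪ ho) := by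
    intro r hr g hb
    rcases Finset.mem_union.mp hr with hrB | hrho
    · -- r ∈ B : all body atoms are entailed by B alone
      have hbodyB : ∀ b ∈ r.body, Atom.groundWith g b ∈ Mmod B := by
        intro b hbmem
        have hbW := hb b hbmem
        rcases hbW with h1 | h2
        · exact h1
        · exfalso
          have hpred : (Atom.groundWith g b).pred = b.pred := rfl
          have : b.pred ∈ Program.bodyPreds B := ⟨r, hrB, b, hbmem, rfl⟩
          exact hBK b.pred this (hpred ▸ h2.1)
      have : Atom.groundWith g r.head ∈ Mmod B := Mmod_isModel B r hrB g hbodyB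
      exact Or.inl this
    · -- r ∈ ho : body atoms have non-head predicates, hence entailed by B
      have hbodyB : ∀ b ∈ r.body, Entails B (Atom.groundWith g b) := by
        intro b hbmem
        have hbW := hb b hbmem
        rcases hbW with h1 | h2
        · exact h1
        · exfalso
          have hpred : (Atom.groundWith g b).pred = b.pred := rfl
          have hbody : b.pred ∈ Program.bodyPreds ho := ⟨r, hrho, b, hbmem, rfl⟩
          exact hsep2 b.pred (hpred ▸ h2.1) hbody
      have hhead : r.head.pred ∈ Program.headPreds ho := ⟨r, hrho, rfl⟩
      by_cases hr2 : r ∈ h₂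
      · have : Atom.groundWith g r.head ∈ Mmod (B ∪ h₂) :=
          Mmod_isModel (B ∪ h₂) r (Finset.mem_union_right _ hr2) g
            (fun b hbmem => entails_mono Finset.subset_union_left (hbodyB b hbmem))
        exact Or.inr ⟨hhead, Or.inl this⟩
      · have : Atom.groundWith g r.head ∈ Mmod (B ∪ (ho \ h₂)) :=
          Mmod_isModel (B ∪ (ho \ h₂)) r
            (Finset.mem_union_right _ (Finset.mem_sdiff.mpr ⟨hrho, hr2⟩)) g
            (fun b hbmem => entails_mono Finset.subset_union_left (hbodyB b hbmem))
        exact Or.inr ⟨hhead, Or.inr this⟩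
  have heW : e ∈ W := he W hWmodel
  rcases heW with h1 | h2
  · exact Or.inl (entails_mono Finset.subset_union_left h1)
  · exact h2.2

/-- Under BK independence, if `h_o` is an optimal separable
solution, then no nonempty proper subset `h₂ ⊊ h_o` is totally incomplete;
moreover if `h₂ ⊆ h_o` is nonempty and totally incomplete, then
`h₃ = h_o \ h₂` is complete, consistent, and of strictly smaller size. -/
theorem no_totally_incomplete_part_of_optimal_separable {V C P : Type}
    (B ho : Program V C P) (Epos Eneg : Finset (GroundAtom C P))
    (hBK : BKIndep B ho)
    (hopt : OptimalSolution B ho Epos Eneg)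
    (hsep : Program.Separable ho) :
    (∀ h₂ : Program V C P, h₂ ⊆ ho → h₂.Nonempty → h₂ ≠ ho →
        ¬ TotallyIncomplete B h₂ Epos) ∧
    (∀ h₂ : Program V C P, h₂ ⊆ ho → h₂.Nonempty → TotallyIncomplete B h₂ Epos →
        Complete B (ho \ h₂) Epos ∧ Consistent B (ho \ h₂) Eneg ∧
          Program.size (ho \ h₂) < Program.size ho) := by
  classical
  have part2 : ∀ h₂ : Program V C P, h₂ ⊆ ho → h₂.Nonempty → TotallyIncomplete B h₂ Epos →
      Complete B (ho \ h₂) Epos ∧ Consistent B (ho \ h₂) Eneg ∧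
        Program.size (ho \ h₂) < Program.size ho := by
    intro h₂ hsub hne hTI
    refine ⟨?_, ?_, ?_⟩
    · -- complete
      intro e heE
      have he : Entails (B ∪ ho) e := hopt.1.1 e heE
      rcases split_entails B ho h₂ hBK hsep.2 hsub e he with h1 | h2
      · exact absurd h1 (hTI e heE)
      · exact h2
    · -- consistent
      intro e heE hEnt
      exact hopt.1.2 e heE
        (entails_mono (Finset.union_subset_union_right Finset.sdiff_subset) hEnt)
    · -- size
      obtain ⟨r₀, hr₀⟩ := hne
      refine Finset.sum_lt_sum_of_subset Finset.sdiff_subset (i := r₀)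
        (hsub hr₀) ?_ ?_ ?_
      · simp [hr₀]
      · simp [Rule.size]
      · intro j _ _; exact Nat.zero_le _
  refine ⟨?_, part2⟩
  intro h₂ hsub hne _ hTI
  obtain ⟨hc, hcons, hsize⟩ := part2 h₂ hsub hne hTI
  have := hopt.2 (ho \ h₂) ⟨hc, hcons⟩
  omega
end
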